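/- arXiv:2504.11407 — 3 statements merged into one kernel-verified Lean document; each statement's English description precedes it below -/
import Mathlib

section
/- Let D be a 2-(v,k,λ) design with k < v admitting a flag-transitive automorphism group G, and let r be the replication number of D. Then for every point x and every point y ≠ x, the integer r/gcd(r,λ) divides the length of the orbit of y under the point stabilizer G_x; in particular r/gcd(r,λ) divides v−1. -/
open Finset

/-!
Fix a point `x` and let `T` be a set of points avoiding `x` and invariant under the stabilizer
`G_x`. By flag-transitivity `G_x` is transitive on the `r` blocks through `x`, and it preserves `T`,
so each of these blocks meets `T` in the same number `c` of points. Counting the incident pairs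
`(z, B)` with `z ∈ T` and `x ∈ B` in two ways gives `r * c = |T| * λ`, so `r ∣ |T| * λ` and hence
`r / gcd(r, λ) ∣ |T|`. Take for `T` a `G_x`-orbit, and the set of all points other than `x`.
-/

theorem Nat.div_gcd_dvd_of_dvd_mul {a b n : ℕ} (hb : 0 < b) (h : a ∣ n * b) :
    a / a.gcd b ∣ n := by
  have hg : 0 < a.gcd b := Nat.gcd_pos_of_pos_right a hb
  have h' : a.gcd b * (a / a.gcd b) ∣ a.gcd b * (n * (b / a.gcd b)) := by
    rwa [Nat.mul_div_cancel' (Nat.gcd_dvd_left a b), mul_left_comm,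
      Nat.mul_div_cancel' (Nat.gcd_dvd_right a b)]
  exact (Nat.coprime_div_gcd_div_gcd hg).dvd_of_dvd_mul_right (Nat.dvd_of_mul_dvd_mul_left hg h')

theorem Finset.card_dvd_sum_of_forall_eq {α : Type*} {s : Finset α} {f : α → ℕ}
    (h : ∀ i ∈ s, ∀ j ∈ s, f i = f j) : #s ∣ ∑ i ∈ s, f i := by
  rcases s.eq_empty_or_nonempty with rfl | ⟨i, hi⟩
  · simp
  · exact Dvd.intro _ (sum_const_nat fun j hj => h j hj i hi).symm

section FlagTransitive

variable {P ι G : Type*} [DecidableEq P] [Group G] [MulAction G P] [MulAction G ι]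
  {blk : ι → Finset P}

theorem card_filter_mem_le_card_filter_mem_smul
    (smul_blk : ∀ (g : G) (i : ι), blk (g • i) = (blk i).image fun x => g • x)
    {g : G} (i : ι) {T : Finset P} (hT : ∀ z ∈ T, g • z ∈ T) :
    #{z ∈ T | z ∈ blk i} ≤ #{z ∈ T | z ∈ blk (g • i)} := by
  refine card_le_card_of_injOn (g • ·) (fun z hz => ?_) (MulAction.injective g).injOn
  simp only [coe_filter, Set.mem_ofPred_eq] at hz ⊢
  exact ⟨hT z hz.1, smul_blk g i ▸ mem_image_of_mem _ hz.2⟩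

theorem card_filter_mem_eq_of_flag_transitive
    (smul_blk : ∀ (g : G) (i : ι), blk (g • i) = (blk i).image fun x => g • x)
    (flag_trans : ∀ (x : P) (i : ι), x ∈ blk i → ∀ (y : P) (j : ι), y ∈ blk j →
      ∃ g : G, g • x = y ∧ g • i = j)
    {x : P} {T : Finset P} (hT : ∀ g ∈ MulAction.stabilizer G x, ∀ z ∈ T, g • z ∈ T)
    {i j : ι} (hi : x ∈ blk i) (hj : x ∈ blk j) :
    #{z ∈ T | z ∈ blk i} = #{z ∈ T | z ∈ blk j} := by
  have le_of_mem : ∀ {i j : ι}, x ∈ blk i → x ∈ blk j →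
      #{z ∈ T | z ∈ blk i} ≤ #{z ∈ T | z ∈ blk j} := by
    intro i j hi hj
    obtain ⟨g, hgx, rfl⟩ := flag_trans x i hi x j hj
    exact card_filter_mem_le_card_filter_mem_smul smul_blk i (hT g hgx)
  exact (le_of_mem hi hj).antisymm (le_of_mem hj hi)

variable [Fintype ι]

theorem rep_dvd_card_mul_of_stabilizer_invariant {lam r : ℕ}
    (pair_count : ∀ x y : P, x ≠ y →
      (univ.filter fun i : ι => x ∈ blk i ∧ y ∈ blk i).card = lam)
    (rep_count : ∀ x : P, (univ.filter fun i : ι => x ∈ blk i).card = r)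
    (smul_blk : ∀ (g : G) (i : ι), blk (g • i) = (blk i).image fun x => g • x)
    (flag_trans : ∀ (x : P) (i : ι), x ∈ blk i → ∀ (y : P) (j : ι), y ∈ blk j →
      ∃ g : G, g • x = y ∧ g • i = j)
    {x : P} {T : Finset P} (hxT : x ∉ T)
    (hT : ∀ g ∈ MulAction.stabilizer G x, ∀ z ∈ T, g • z ∈ T) :
    r ∣ #T * lam := by
  set S : Finset ι := {i | x ∈ blk i}
  have double_count : ∑ i ∈ S, #(T.bipartiteAbove (fun i z => z ∈ blk i) i) = #T * lam := by
    rw [sum_card_bipartiteAbove_eq_sum_card_bipartiteBelow, sum_const_nat]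
    intro z hz
    rw [bipartiteBelow, filter_filter]
    exact pair_count x z (ne_of_mem_of_not_mem hz hxT).symm
  rw [← rep_count x, ← double_count]
  refine card_dvd_sum_of_forall_eq fun i hi j hj => ?_
  exact card_filter_mem_eq_of_flag_transitive smul_blk flag_trans hT (mem_filter.1 hi).2
    (mem_filter.1 hj).2

end FlagTransitive

theorem rep_div_gcd_dvd_suborbit_lengths_general
    {P ι G : Type*} [Fintype P] [DecidableEq P] [Fintype ι]
    [Group G] [MulAction G P] [MulAction G ι]
    (blk : ι → Finset P) (v lam r : ℕ)
    (card_points : Fintype.card P = v)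
    (lam_pos : 0 < lam)
    (pair_count : ∀ x y : P, x ≠ y →
      (univ.filter fun i : ι => x ∈ blk i ∧ y ∈ blk i).card = lam)
    (rep_count : ∀ x : P, (univ.filter fun i : ι => x ∈ blk i).card = r)
    (smul_blk : ∀ (g : G) (i : ι), blk (g • i) = (blk i).image fun x => g • x)
    (flag_trans : ∀ (x : P) (i : ι), x ∈ blk i → ∀ (y : P) (j : ι), y ∈ blk j →
      ∃ g : G, g • x = y ∧ g • i = j) :
    (∀ x y : P, x ≠ y →
      r / Nat.gcd r lam ∣ Nat.card (MulAction.orbit (MulAction.stabilizer G x) y)) ∧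
    r / Nat.gcd r lam ∣ v - 1 := by
  classical
  have key : ∀ (x : P) (T : Finset P), x ∉ T →
      (∀ g ∈ MulAction.stabilizer G x, ∀ z ∈ T, g • z ∈ T) → r / r.gcd lam ∣ #T :=
    fun x T hxT hT => Nat.div_gcd_dvd_of_dvd_mul lam_pos
      (rep_dvd_card_mul_of_stabilizer_invariant pair_count rep_count smul_blk flag_trans hxT hT)
  constructor
  · intro x y hxy
    rw [Nat.card_eq_card_toFinset]
    refine key x _ (fun hx => hxy ?_) fun g hg z hz => ?_
    · obtain ⟨h, hhy⟩ := Set.mem_toFinset.1 hx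
      have hhx : (h : G) • x = x := h.2
      exact (MulAction.injective (h : G) (hhy.trans hhx.symm)).symm
    · exact Set.mem_toFinset.2 (MulAction.mem_orbit_of_mem_orbit ⟨g, hg⟩ (Set.mem_toFinset.1 hz))
  · rcases isEmpty_or_nonempty P with hP | ⟨⟨x⟩⟩
    · simp [← card_points]
    · rw [← card_points, ← card_univ, ← card_erase_of_mem (mem_univ x)]
      refine key x _ (notMem_erase x univ) fun g hg z hz => mem_erase.2 ⟨?_, mem_univ _⟩
      rw [← (MulAction.mem_stabilizer_iff.1 hg : g • x = x)]
      exact (MulAction.injective g).ne (ne_of_mem_erase hz)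

/-- Lemma 2.5(2) of the paper.  Let `D` be a 2-`(v,k,λ)` design
with `k < v` and replication number `r`, admitting a flag-transitive automorphism
group `G`.  Then for every point `x` and every point `y ≠ x`, the integer
`r/gcd(r,λ)` divides the length of the orbit of `y` under the point stabiliser
`G_x`; in particular `r/gcd(r,λ)` divides `v − 1`. -/
theorem rep_div_gcd_dvd_suborbit_lengths
    {P ι G : Type*} [Fintype P] [DecidableEq P] [Fintype ι]
    [Group G] [MulAction G P] [MulAction G ι]
    (blk : ι → Finset P) (v k lam r : ℕ)
    (card_points : Fintype.card P = v)
    (k_lt_v : k < v) (lam_pos : 0 < lam)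
    (blk_card : ∀ i : ι, (blk i).card = k)
    (pair_count : ∀ x y : P, x ≠ y →
      (univ.filter fun i : ι => x ∈ blk i ∧ y ∈ blk i).card = lam)
    (rep_count : ∀ x : P, (univ.filter fun i : ι => x ∈ blk i).card = r)
    (smul_blk : ∀ (g : G) (i : ι), blk (g • i) = (blk i).image fun x => g • x)
    (flag_trans : ∀ (x : P) (i : ι), x ∈ blk i → ∀ (y : P) (j : ι), y ∈ blk j →
      ∃ g : G, g • x = y ∧ g • i = j) :
    (∀ x y : P, x ≠ y →
      r / Nat.gcd r lam ∣ Nat.card (MulAction.orbit (MulAction.stabilizer G x) y)) ∧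
    r / Nat.gcd r lam ∣ v - 1 :=
  rep_div_gcd_dvd_suborbit_lengths_general blk v lam r card_points lam_pos pair_count rep_count
    smul_blk flag_trans
end

section
/- Assume Hypothesis 1 (with the Camina–Zieschang data from the context). Then 2 ≤ k₀ < v₀ and v₀ ≠ 3. -/
open Finset

namespace FlagTransitivePaper

/-- A nontrivial 2-design `D` (point set `P`, blocks indexed by `ι`, the block `i`
having point set `blk i`) with parameters `(v, k, λ)`, replication number `r` and `b`
blocks, together with a group `G` acting on points and blocks as a flag-transitive
automorphism group of `D`, preserving a nontrivial partition `Σ` of `P` into `v₁`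
classes of size `v₀`; the partition is encoded by the class map `proj : P → Q`, where
`Q` is the set of classes.  The structure also records the Camina–Zieschang data:
the constant `k₀` (every block meets every class in `0` or `k₀` points), `k₁ = k/k₀`
(the constant number of classes met by a block, i.e. the size of the trace of a
block on `Σ`), the constant `μ` (the number of blocks inducing a given nonempty
trace on a given class) and the constant `η` (the number of blocks having a given
trace on `Σ`), as well as the parameters `λ₁` and `r₁` of the quotient structure
`D₁` (these are constrained only via `Hyp32`, i.e. when `D₁` is a 2-design). -/
structure Setting (P ι Q G : Type*) [Fintype P] [DecidableEq P] [Fintype ι]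
    [Fintype Q] [DecidableEq Q] [Group G] [MulAction G P] [MulAction G ι]
    [MulAction G Q] where
  /-- the set of points of a block -/
  blk : ι → Finset P
  /-- the map sending a point to its class in the partition `Σ` -/
  proj : P → Q
  v : ℕ
  k : ℕ
  lam : ℕ
  r : ℕ
  b : ℕ
  v₀ : ℕ
  v₁ : ℕ
  k₀ : ℕ
  k₁ : ℕ
  μ : ℕ
  η : ℕ
  lam₁ : ℕ
  r₁ : ℕ
  card_points : Fintype.card P = v
  card_blocks : Fintype.card ι = b
  two_lt_k : 2 < k
  k_lt_v : k < v
  blk_card : ∀ i : ι, (blk i).card = k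
  pair_count : ∀ x y : P, x ≠ y →
    (univ.filter fun i : ι => x ∈ blk i ∧ y ∈ blk i).card = lam
  rep_count : ∀ x : P, (univ.filter fun i : ι => x ∈ blk i).card = r
  smul_blk : ∀ (g : G) (i : ι), blk (g • i) = (blk i).image fun x => g • x
  flag_trans : ∀ (x : P) (i : ι), x ∈ blk i → ∀ (y : P) (j : ι), y ∈ blk j →
    ∃ g : G, g • x = y ∧ g • i = j
  proj_equivariant : ∀ (g : G) (x : P), proj (g • x) = g • proj x
  fiber_card : ∀ q : Q, (univ.filter fun x : P => proj x = q).card = v₀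
  card_classes : Fintype.card Q = v₁
  one_lt_v₀ : 1 < v₀
  one_lt_v₁ : 1 < v₁
  two_le_k₀ : 2 ≤ k₀
  k₀_mul_k₁ : k₀ * k₁ = k
  blk_fiber_card : ∀ (i : ι) (q : Q),
    ((blk i).filter fun x => proj x = q).card = 0 ∨
      ((blk i).filter fun x => proj x = q).card = k₀
  trace_card : ∀ i : ι,
    (univ.filter fun q : Q => ((blk i).filter fun x => proj x = q).Nonempty).card = k₁
  mu_count : ∀ (i : ι) (q : Q), ((blk i).filter fun x => proj x = q).Nonempty →
    (univ.filter fun j : ι =>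
      (blk j).filter (fun x => proj x = q) = (blk i).filter fun x => proj x = q).card = μ
  eta_count : ∀ i : ι,
    (univ.filter fun j : ι =>
      (univ.filter fun q : Q => ((blk j).filter fun x => proj x = q).Nonempty) =
        univ.filter fun q : Q => ((blk i).filter fun x => proj x = q).Nonempty).card = η

variable {P ι Q G : Type*} [Fintype P] [DecidableEq P] [Fintype ι] [Fintype Q]
  [DecidableEq Q] [Group G] [MulAction G P] [MulAction G ι] [MulAction G Q]

namespace Setting

variable (S : Setting P ι Q G)

/-- The trace of the block `i` on the class `q`, i.e. `B ∩ Δ`. -/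
def fiberTrace (i : ι) (q : Q) : Finset P := (S.blk i).filter fun x => S.proj x = q

/-- The trace of the block `i` on `Σ`: the set of classes met by the block. -/
def trace (i : ι) : Finset Q := univ.filter fun q : Q => (S.fiberTrace i q).Nonempty

/-- `A = gcd (k₁ − 1, v₁ − 1)`. -/
def A : ℕ := Nat.gcd (S.k₁ - 1) (S.v₁ - 1)

/-- `η₀ = gcd (η, v₀ / k₀)`. -/
def η₀ : ℕ := Nat.gcd S.η (S.v₀ / S.k₀)

/-- `η₁ = η / η₀`. -/
def η₁ : ℕ := S.η / S.η₀

/-- `r₁' = (v₀ / (k₀ η₀)) · ((v₀ − 1)/(k₀ − 1))`. -/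
def r₁' : ℕ := S.v₀ / (S.k₀ * S.η₀) * ((S.v₀ - 1) / (S.k₀ - 1))

/-- **Hypothesis 1**: `λ` is a prime dividing `r`, `v ≤ 2λ²(λ−1)`, and the
partition `Σ` is minimal (w.r.t. refinement) among the nontrivial `G`-invariant
partitions of the point set. -/
def Hyp1 : Prop :=
  S.lam.Prime ∧ S.lam ∣ S.r ∧ S.v ≤ 2 * S.lam ^ 2 * (S.lam - 1) ∧
    ∀ s : Setoid P,
      (∀ (g : G) (x y : P), s.r x y → s.r (g • x) (g • y)) →
      (∀ x y : P, s.r x y → S.proj x = S.proj y) →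
      (∃ x y : P, x ≠ y ∧ s.r x y) →
      ∀ x y : P, s.r x y ↔ S.proj x = S.proj y

/-- The quotient structure `D₁` is a 2-design with parameters `(v₁, k₁, λ₁)`,
where `λ₁ = v₀²λ/(k₀²η)`, with replication number `r₁ = (v₁−1)λ₁/(k₁−1)`:
any two distinct classes are met simultaneously by exactly `λ₁ · η` blocks. -/
def QuotientTwoDesign : Prop :=
  (∀ q q' : Q, q ≠ q' →
    (univ.filter fun i : ι => q ∈ S.trace i ∧ q' ∈ S.trace i).card = S.lam₁ * S.η) ∧
  S.lam₁ * (S.k₀ ^ 2 * S.η) = S.v₀ ^ 2 * S.lam ∧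
  S.r₁ * (S.k₁ - 1) = S.lam₁ * (S.v₁ - 1)

/-- The quotient structure `D₁` is a symmetric 1-design with `k₁ = v₁ − 1`
(in particular it has exactly `v₁` distinct blocks, namely the distinct traces). -/
def QuotientSymm1Design : Prop :=
  S.k₁ = S.v₁ - 1 ∧ (univ.image fun i : ι => S.trace i).card = S.v₁

/-- **Hypothesis 3/2**: Hypothesis 1 holds and `D₁` is a 2-`(v₁, k₁, λ₁)` design,
not a symmetric 1-design with `k₁ = v₁ − 1`. -/
def Hyp32 : Prop := S.Hyp1 ∧ S.QuotientTwoDesign ∧ ¬ S.QuotientSymm1Design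

/-- **Hypothesis 2**: Hypothesis 3/2 holds, `r > k` and `λ > 3`. -/
def Hyp2 : Prop := S.Hyp32 ∧ S.k < S.r ∧ 3 < S.lam

/-- `D₁` is of type I: `k₁ = (k₁, v₁) · (k₁, r/λ) · λ`. -/
def TypeI : Prop := S.k₁ = Nat.gcd S.k₁ S.v₁ * Nat.gcd S.k₁ (S.r / S.lam) * S.lam

/-- `D₁` is of type II: `k₁ = (k₁, v₁) · (k₁, r/λ)`. -/
def TypeII : Prop := S.k₁ = Nat.gcd S.k₁ S.v₁ * Nat.gcd S.k₁ (S.r / S.lam)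

/-- `D₁` is of type Ia: type I, and `λ` divides none of `v₀(v₀−1)`, `v₁(v₁−1)`,
`v(v−1)`. -/
def TypeIa : Prop :=
  S.TypeI ∧ ¬ S.lam ∣ S.v₀ * (S.v₀ - 1) ∧ ¬ S.lam ∣ S.v₁ * (S.v₁ - 1) ∧
    ¬ S.lam ∣ S.v * (S.v - 1)

/-- `D₁` is of type Ic: type I, and
`(v₀, k₀, v₁, k₁) = ((λ²+λ+2)/2, 2, (λ−1)(λ²−2)/2, λ²(λ−1)/4)`. -/
def TypeIc : Prop :=
  S.TypeI ∧ S.k₀ = 2 ∧ 2 * S.v₀ = S.lam ^ 2 + S.lam + 2 ∧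
    2 * S.v₁ = (S.lam - 1) * (S.lam ^ 2 - 2) ∧ 4 * S.k₁ = S.lam ^ 2 * (S.lam - 1)

/-- `D₁` is of type IIb: type II and `λ > v₀`. -/
def TypeIIb : Prop := S.TypeII ∧ S.v₀ < S.lam

/-- The permutation of the class `Δ = {x : P // proj x = q}` induced by an element
of the (setwise) stabiliser `G_Δ` of the class. -/
def classPerm (q : Q) (g : MulAction.stabilizer G q) :
    Equiv.Perm {x : P // S.proj x = q} where
  toFun x := ⟨(g : G) • (x : P), by
    rw [S.proj_equivariant, x.2]
    exact MulAction.mem_stabilizer_iff.mp g.2⟩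
  invFun x := ⟨(g : G)⁻¹ • (x : P), by
    rw [S.proj_equivariant, x.2, inv_smul_eq_iff]
    exact (MulAction.mem_stabilizer_iff.mp g.2).symm⟩
  left_inv x := Subtype.ext (inv_smul_smul _ _)
  right_inv x := Subtype.ext (smul_inv_smul _ _)

/-- The natural homomorphism from the stabiliser `G_Δ` of a class `Δ` of `Σ` to the
symmetric group on `Δ`; its range is the induced group `G_Δ^Δ`. -/
def classHom (q : Q) :
    MulAction.stabilizer G q →* Equiv.Perm {x : P // S.proj x = q} where
  toFun := S.classPerm q
  map_one' := by
    apply Equiv.ext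
    intro x
    apply Subtype.ext
    show ((1 : MulAction.stabilizer G q) : G) • (x : P) = (x : P)
    simp
  map_mul' g h := by
    apply Equiv.ext
    intro x
    apply Subtype.ext
    show ((g * h : MulAction.stabilizer G q) : G) • (x : P) =
      (g : G) • ((h : G) • (x : P))
    simp [mul_smul]

end Setting

/-!
Everything follows from double counting incident pairs of points: for disjoint point sets
`A` and `B`, the sum over all blocks `β` of `|β ∩ A| |β ∩ B|` is `|A| |B| λ`. Taking `A = {x}` gives `λ(v − 1) = r(k − 1)`
and `λ(v₀ − 1) = r(k₀ − 1)`, hence `(k₀ − 1)(v − 1) = (k − 1)(v₀ − 1)`, and `k < v` forces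
`k₀ < v₀`. Taking for `A` and `B` two classes of `Σ` gives `k₀² ∣ v₀² λ`; if `v₀ = 3` then
`k₀ = 2`, so `4 ∣ 9λ` and the prime `λ` would be `2`, which is absurd.
-/

namespace Setting

variable (S : Setting P ι Q G)

def fiber (q : Q) : Finset P := univ.filter fun x => S.proj x = q

theorem card_fiber (q : Q) : #(S.fiber q) = S.v₀ := S.fiber_card q

theorem blk_inter_fiber (i : ι) (q : Q) : S.blk i ∩ S.fiber q = S.fiberTrace i q := by
  ext x; simp [fiber, fiberTrace]

theorem mem_trace {i : ι} {q : Q} : q ∈ S.trace i ↔ (S.fiberTrace i q).Nonempty := by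
  simp [trace]

theorem card_fiberTrace (i : ι) (q : Q) :
    #(S.fiberTrace i q) = if q ∈ S.trace i then S.k₀ else 0 := by
  rcases S.blk_fiber_card i q with h | h <;> change #(S.fiberTrace i q) = _ at h
  · rw [if_neg (by simp [mem_trace, ← card_pos, h]), h]
  · rw [if_pos (by simp [mem_trace, ← card_pos, h]; linarith [S.two_le_k₀]), h]

theorem sum_card_blk_inter_mul_card_blk_inter {A B : Finset P} (hAB : Disjoint A B) :
    ∑ i, #(S.blk i ∩ A) * #(S.blk i ∩ B) = #A * #B * S.lam := by
  let incident : ι → P × P → Prop := fun i p => p.1 ∈ S.blk i ∧ p.2 ∈ S.blk i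
  calc ∑ i, #(S.blk i ∩ A) * #(S.blk i ∩ B)
      = ∑ i, #((A ×ˢ B).bipartiteAbove incident i) := by
        refine sum_congr rfl fun i _ => ?_
        rw [← card_product]
        congr 1
        ext ⟨x, y⟩
        simp only [bipartiteAbove, incident, mem_product, mem_inter, mem_filter]
        tauto
    _ = ∑ p ∈ A ×ˢ B, #(univ.bipartiteBelow incident p) :=
        sum_card_bipartiteAbove_eq_sum_card_bipartiteBelow _
    _ = ∑ p ∈ A ×ˢ B, S.lam := by
        refine sum_congr rfl fun p hp => S.pair_count _ _ fun hxy => ?_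
        obtain ⟨hx, hy⟩ := mem_product.mp hp
        exact disjoint_left.mp hAB hx (hxy ▸ hy)
    _ = #A * #B * S.lam := by rw [sum_const, card_product, smul_eq_mul]

theorem card_mul_lam_eq_rep_mul {x : P} {B : Finset P} (hx : x ∉ B) {c : ℕ}
    (hc : ∀ i, x ∈ S.blk i → #(S.blk i ∩ B) = c) : #B * S.lam = S.r * c := by
  have hcount := S.sum_card_blk_inter_mul_card_blk_inter (disjoint_singleton_left.mpr hx)
  rw [card_singleton, one_mul] at hcount
  rw [← hcount, ← S.rep_count x, card_eq_sum_ones, sum_mul, one_mul, sum_filter]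
  refine sum_congr rfl fun i _ => ?_
  by_cases hxi : x ∈ S.blk i
  · rw [if_pos hxi, inter_singleton_of_mem hxi, card_singleton, one_mul, hc i hxi]
  · rw [if_neg hxi, inter_singleton_of_notMem hxi, card_empty, zero_mul]

theorem lam_mul_v_sub_one (x : P) : S.lam * (S.v - 1) = S.r * (S.k - 1) := by
  rw [← S.card_mul_lam_eq_rep_mul (notMem_erase x univ) fun i hxi => ?_,
    card_erase_of_mem (mem_univ x), card_univ, S.card_points, mul_comm]
  rw [inter_erase, inter_univ, card_erase_of_mem hxi, S.blk_card]

theorem lam_mul_v₀_sub_one (x : P) : S.lam * (S.v₀ - 1) = S.r * (S.k₀ - 1) := by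
  have hx : x ∈ S.fiber (S.proj x) := by simp [fiber]
  rw [← S.card_mul_lam_eq_rep_mul (notMem_erase x _) fun i hxi => ?_,
    card_erase_of_mem hx, S.card_fiber, mul_comm]
  have hxi' : x ∈ S.fiberTrace i (S.proj x) := by simp [fiberTrace, hxi]
  rw [inter_erase, blk_inter_fiber, card_erase_of_mem hxi', card_fiberTrace,
    if_pos (S.mem_trace.mpr ⟨x, hxi'⟩)]

theorem k₀_sub_one_mul_v_sub_one (hlam : S.lam ≠ 0) :
    (S.k₀ - 1) * (S.v - 1) = (S.k - 1) * (S.v₀ - 1) := by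
  have hv := S.k_lt_v
  have hk := S.two_lt_k
  obtain ⟨x⟩ : Nonempty P := Fintype.card_pos_iff.mp (by rw [S.card_points]; omega)
  have hr : S.r ≠ 0 := by
    rintro hr
    have := S.lam_mul_v_sub_one x
    rw [hr, zero_mul, mul_eq_zero] at this
    omega
  apply Nat.eq_of_mul_eq_mul_left (Nat.pos_of_ne_zero hr)
  calc S.r * ((S.k₀ - 1) * (S.v - 1)) = S.lam * (S.v₀ - 1) * (S.v - 1) := by
        rw [S.lam_mul_v₀_sub_one x]; ring
    _ = S.r * ((S.k - 1) * (S.v₀ - 1)) := by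
        rw [mul_right_comm, S.lam_mul_v_sub_one x]; ring

theorem k₀_lt_v₀ (hlam : S.lam ≠ 0) : S.k₀ < S.v₀ := by
  have hv := S.k_lt_v
  have hk := S.two_lt_k
  have hv₀ := S.one_lt_v₀
  have : (S.k₀ - 1) * (S.v - 1) < (S.v₀ - 1) * (S.v - 1) := by
    rw [S.k₀_sub_one_mul_v_sub_one hlam, mul_comm]
    exact Nat.mul_lt_mul_of_pos_left (by omega) (by omega)
  have := Nat.lt_of_mul_lt_mul_right this
  omega

theorem card_filter_mem_trace_mul_k₀_sq {q q' : Q} (hqq' : q ≠ q') :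
    #(univ.filter fun i => q ∈ S.trace i ∧ q' ∈ S.trace i) * S.k₀ ^ 2 =
      S.v₀ ^ 2 * S.lam := by
  have hdisj : Disjoint (S.fiber q) (S.fiber q') := by
    simp only [fiber, disjoint_filter]
    rintro x - rfl
    exact hqq'
  have hcount := S.sum_card_blk_inter_mul_card_blk_inter hdisj
  simp only [blk_inter_fiber, card_fiberTrace, card_fiber, ite_zero_mul_ite_zero,
    ← sum_filter, sum_const, smul_eq_mul] at hcount
  simpa only [sq] using hcount

end Setting

/-- Lemma 3.1 of the paper. Assume Hypothesis 1 (with the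
Camina–Zieschang data). Then `2 ≤ k₀ < v₀` and `v₀ ≠ 3`. -/
theorem statement_3 (S : Setting P ι Q G) (h : S.Hyp1) :
    2 ≤ S.k₀ ∧ S.k₀ < S.v₀ ∧ S.v₀ ≠ 3 := by
  obtain ⟨hlam, -⟩ := h
  have hk₀ := S.k₀_lt_v₀ hlam.ne_zero
  refine ⟨S.two_le_k₀, hk₀, fun hv₀ => ?_⟩
  have hk₀_two : S.k₀ = 2 := by have := S.two_le_k₀; omega
  obtain ⟨q, q', hqq'⟩ := Fintype.exists_pair_of_one_lt_card
    (S.card_classes ▸ S.one_lt_v₁)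
  have hcount := S.card_filter_mem_trace_mul_k₀_sq hqq'
  rw [hk₀_two, hv₀] at hcount
  have h2 : 2 ∣ S.lam := by omega
  have := (Nat.prime_dvd_prime_iff_eq Nat.prime_two hlam).mp h2
  omega

end FlagTransitivePaper
end

section
/- Assume Hypothesis 1 (with the Camina–Zieschang data from the context). Then the inner structure D₀ is a 2-(v₀,k₀,λ₀) design with λ₀ = λ/μ; in particular the alternative that D₀ is a symmetric 1-design with k₀ = v₀−1 does not occur. -/
open Finset

namespace FlagTransitivePaper

variable {P ι Q G : Type*} [Fintype P] [DecidableEq P] [Fintype ι] [Fintype Q]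
  [DecidableEq Q] [Group G] [MulAction G P] [MulAction G ι] [MulAction G Q]

/-! Grouping the `λ` blocks through two points of a class `Δ` by their trace on `Δ` gives
`λ = λ₀ μ`, since the `μ` blocks with a given trace all contain both points.

If `k₀ = v₀ - 1`, counting flags inside a class gives `λ (v₀ - 1) = r (v₀ - 2)`, and `λ ∣ r`
forces `v₀ = 3`, `k₀ = 2`, `r = 2λ`. Counting the points of another class on the blocks through a
fixed point shows `k₀ ∣ v₀ λ`, so the prime `λ` is `2` and `r = 4`. Then `v = 2k - 1`, and
`bk = vr = 4 (2k - 1)` forces `k = 4`, `v = 7`, which is not a multiple of `v₀ = 3`. -/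

theorem eq_three_of_sub_one_eq_mul_sub_two {n m : ℕ} (hn : 3 ≤ n) (h : n - 1 = m * (n - 2)) :
    n = 3 ∧ m = 2 := by
  obtain ⟨a, rfl⟩ : ∃ a, n = a + 3 := ⟨n - 3, by omega⟩
  rw [show a + 3 - 1 = a + 2 by omega, show a + 3 - 2 = a + 1 by omega] at h
  rcases m with _ | _ | _ | m
  all_goals first | omega | nlinarith

theorem sum_card_inter_of_pair_count {α κ : Type*} [DecidableEq α] [Fintype κ]
    (blk : κ → Finset α) (x : α) (W : Finset α) {lam : ℕ} (h : ∀ y ∈ W, #{i | x ∈ blk i ∧ y ∈ blk i} = lam) :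
    ∑ i with x ∈ blk i, #(blk i ∩ W) = #W * lam := by
  calc ∑ i with x ∈ blk i, #(blk i ∩ W)
      = ∑ i with x ∈ blk i, #(W.bipartiteBelow (· ∈ blk ·) i) := by
        refine sum_congr rfl fun i _ => ?_
        rw [bipartiteBelow, filter_mem_eq_inter, inter_comm]
    _ = ∑ y ∈ W, #(({i | x ∈ blk i} : Finset κ).bipartiteAbove (· ∈ blk ·) y) :=
        (sum_card_bipartiteAbove_eq_sum_card_bipartiteBelow _).symm
    _ = ∑ _y ∈ W, lam := by
        refine sum_congr rfl fun y hy => ?_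
        rw [bipartiteAbove, filter_filter, h y hy]
    _ = #W * lam := by rw [sum_const, smul_eq_mul]

namespace Setting

variable (S : Setting P ι Q G)

theorem nonempty_points (S : Setting P ι Q G) : Nonempty P :=
  Fintype.card_pos_iff.mp (S.card_points ▸ (S.two_lt_k.trans S.k_lt_v).pos)

theorem sum_card_blk_inter {x : P} {W : Finset P} (hx : x ∉ W) :
    ∑ i with x ∈ S.blk i, #(S.blk i ∩ W) = #W * S.lam :=
  sum_card_inter_of_pair_count S.blk x W fun y hy => S.pair_count x y fun hxy => hx (hxy ▸ hy)

theorem card_mul_lam_eq_r_mul {x : P} {W : Finset P} (hx : x ∉ W) {c : ℕ}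
    (hc : ∀ i, x ∈ S.blk i → #(S.blk i ∩ W) = c) : #W * S.lam = S.r * c := by
  rw [← S.sum_card_blk_inter hx, sum_congr rfl fun i hi => hc i (mem_filter.mp hi).2, sum_const,
    S.rep_count, smul_eq_mul]

theorem card_fiberTrace_of_mem {i : ι} {x : P} (hx : x ∈ S.blk i) :
    #(S.fiberTrace i (S.proj x)) = S.k₀ :=
  (S.blk_fiber_card i (S.proj x)).resolve_left <|
    card_ne_zero_of_mem (a := x) (by simp [hx])

theorem v₀_sub_one_mul_lam : (S.v₀ - 1) * S.lam = S.r * (S.k₀ - 1) := by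
  obtain ⟨x⟩ := S.nonempty_points
  have hW : #(({z | S.proj z = S.proj x} : Finset P).erase x) = S.v₀ - 1 := by
    rw [card_erase_of_mem (by simp), S.fiber_card]
  rw [← hW]
  refine S.card_mul_lam_eq_r_mul (notMem_erase x _) fun i hi => ?_
  have htrace : S.blk i ∩ ({z | S.proj z = S.proj x} : Finset P).erase x =
      (S.fiberTrace i (S.proj x)).erase x := by
    ext z
    simp only [fiberTrace, mem_inter, mem_erase, mem_filter, mem_univ, true_and]
    tauto
  rw [htrace, card_erase_of_mem (by simp [fiberTrace, hi]), S.card_fiberTrace_of_mem hi]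

theorem v_sub_one_mul_lam : (S.v - 1) * S.lam = S.r * (S.k - 1) := by
  obtain ⟨x⟩ := S.nonempty_points
  have hW : #(univ.erase x) = S.v - 1 := by
    rw [card_erase_of_mem (mem_univ x), card_univ, S.card_points]
  rw [← hW]
  refine S.card_mul_lam_eq_r_mul (notMem_erase x _) fun i hi => ?_
  rw [inter_erase, inter_univ, card_erase_of_mem hi, S.blk_card]

theorem b_mul_k : S.b * S.k = S.v * S.r := by
  have h := sum_card_bipartiteAbove_eq_sum_card_bipartiteBelow (fun x i => x ∈ S.blk i)
    (s := univ) (t := univ)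
  simp only [bipartiteAbove, bipartiteBelow, filter_mem_eq_inter, univ_inter, S.rep_count,
    S.blk_card, sum_const, card_univ, S.card_points, S.card_blocks, smul_eq_mul] at h
  exact h.symm

theorem v_eq_v₀_mul_v₁ : S.v = S.v₀ * S.v₁ := by
  rw [← S.card_points, ← card_univ, card_eq_sum_card_fiberwise fun x _ => mem_univ (S.proj x),
    sum_congr rfl fun q _ => S.fiber_card q, sum_const, card_univ, S.card_classes, smul_eq_mul,
    mul_comm]

theorem exists_ne_of_proj_eq : ∃ x y : P, S.proj x = S.proj y ∧ x ≠ y := by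
  have hQ : 0 < Fintype.card Q := by rw [S.card_classes]; exact zero_lt_one.trans S.one_lt_v₁
  obtain ⟨q⟩ := Fintype.card_pos_iff.mp hQ
  obtain ⟨x, hx, y, hy, hxy⟩ := one_lt_card.mp (S.fiber_card q ▸ S.one_lt_v₀)
  exact ⟨x, y, (mem_filter.mp hx).2.trans (mem_filter.mp hy).2.symm, hxy⟩

theorem lam_eq_card_image_fiberTrace_mul_μ {q : Q} {x y : P} (hx : S.proj x = q)
    (hy : S.proj y = q) (hxy : x ≠ y) :
    S.lam = #(({i | x ∈ S.blk i ∧ y ∈ S.blk i} : Finset ι).image (S.fiberTrace · q)) * S.μ := by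
  set F : Finset ι := {i | x ∈ S.blk i ∧ y ∈ S.blk i}
  have hgroup : ∀ t ∈ F.image (S.fiberTrace · q), #{i ∈ F | S.fiberTrace i q = t} = S.μ := by
    intro t ht
    obtain ⟨i₀, hi₀, rfl⟩ := mem_image.mp ht
    have hx₀ : x ∈ S.fiberTrace i₀ q := by simp_all [F, fiberTrace]
    have hy₀ : y ∈ S.fiberTrace i₀ q := by simp_all [F, fiberTrace]
    rw [← S.mu_count i₀ q ⟨x, hx₀⟩]
    congr 1
    ext j
    simp only [F, mem_filter, mem_univ, true_and]
    refine ⟨And.right, fun hj => ⟨?_, hj⟩⟩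
    have htrace : S.fiberTrace j q = S.fiberTrace i₀ q := hj
    rw [← htrace] at hx₀ hy₀
    exact ⟨(mem_filter.mp hx₀).1, (mem_filter.mp hy₀).1⟩
  rw [← S.pair_count x y hxy, card_eq_sum_card_image (S.fiberTrace · q) F,
    sum_congr rfl hgroup, sum_const, smul_eq_mul]

theorem k₀_dvd_v₀_mul_lam : S.k₀ ∣ S.v₀ * S.lam := by
  obtain ⟨x⟩ := S.nonempty_points
  obtain ⟨q, hq⟩ := Fintype.exists_ne_of_one_lt_card (S.card_classes ▸ S.one_lt_v₁) (S.proj x)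
  have hx : x ∉ ({z | S.proj z = q} : Finset P) := by simpa using hq.symm
  rw [← S.fiber_card q, ← S.sum_card_blk_inter hx]
  refine dvd_sum fun i _ => ?_
  rw [inter_filter, inter_univ]
  rcases S.blk_fiber_card i q with h | h
  · exact h ▸ dvd_zero S.k₀
  · exact h ▸ dvd_rfl

theorem k₀_ne_v₀_sub_one (hlam : S.lam.Prime) (hr : S.lam ∣ S.r) : S.k₀ ≠ S.v₀ - 1 := by
  intro hk₀
  obtain ⟨m, hm⟩ := hr
  obtain ⟨hv₀, hm₂⟩ : S.v₀ = 3 ∧ m = 2 := by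
    refine eq_three_of_sub_one_eq_mul_sub_two (by have := S.two_le_k₀; omega) ?_
    refine Nat.eq_of_mul_eq_mul_right hlam.pos ?_
    rw [S.v₀_sub_one_mul_lam, hk₀, hm, show S.v₀ - 1 - 1 = S.v₀ - 2 by omega]
    ring
  have hk₀₂ : S.k₀ = 2 := by omega
  have hlam₂ : S.lam = 2 := by
    have h := S.k₀_dvd_v₀_mul_lam
    rw [hk₀₂, hv₀] at h
    exact ((Nat.prime_dvd_prime_iff_eq Nat.prime_two hlam).mp (by omega)).symm
  have hr₄ : S.r = 4 := by rw [hm, hlam₂, hm₂]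
  have hv : S.v = 2 * S.k - 1 := by
    have h := S.v_sub_one_mul_lam
    have := S.two_lt_k
    rw [hlam₂, hr₄] at h
    omega
  have hbk : S.b * S.k = 4 * (2 * S.k - 1) := by rw [S.b_mul_k, hv, hr₄, mul_comm]
  have hv₃ : S.v = 3 * S.v₁ := hv₀ ▸ S.v_eq_v₀_mul_v₁
  have hk := S.two_lt_k
  have hb : S.b < 8 := by
    by_contra! hb
    have := Nat.mul_le_mul_right S.k hb
    omega
  generalize S.b = b at *
  interval_cases b <;> omega

end Setting

/-- Lemma 3.2 of the paper. Assume Hypothesis 1 (with the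
Camina–Zieschang data). Then the inner structure `D₀` is a 2-`(v₀, k₀, λ₀)` design
with `λ₀ = λ/μ`: i.e. `μ ∣ λ` and any two distinct points of a class `Δ` of `Σ`
lie in exactly `λ/μ` distinct blocks of `D₀` (distinct traces `B ∩ Δ`); in
particular the alternative `k₀ = v₀ − 1` (a symmetric 1-design) does not occur. -/
theorem statement_4 (S : Setting P ι Q G) (h : S.Hyp1) :
    S.μ ∣ S.lam ∧
    (∀ (q : Q) (x y : P), S.proj x = q → S.proj y = q → x ≠ y →
      ((univ.filter fun i : ι => x ∈ S.blk i ∧ y ∈ S.blk i).image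
        fun i => S.fiberTrace i q).card = S.lam / S.μ) ∧
    S.k₀ ≠ S.v₀ - 1 := by
  obtain ⟨hprime, hr, -, -⟩ := h
  obtain ⟨x, y, hxy, hne⟩ := S.exists_ne_of_proj_eq
  have hcount := S.lam_eq_card_image_fiberTrace_mul_μ rfl hxy.symm hne
  have hμ : 0 < S.μ := Nat.pos_of_mul_pos_left (hcount ▸ hprime.pos)
  refine ⟨Dvd.intro_left _ hcount.symm, fun q x y hx hy hne => ?_, S.k₀_ne_v₀_sub_one hprime hr⟩
  exact (Nat.div_eq_of_eq_mul_left hμ (S.lam_eq_card_image_fiberTrace_mul_μ hx hy hne)).symm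

end FlagTransitivePaper
end
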